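/- arXiv:1201.5283 — 3 statements merged into one kernel-verified Lean document; each statement's English description precedes it below -/
import Mathlib

section
/- (Projection onto box-plus-linear-constraint domain.) Let Q = {α ∈ R^n : 0 ≤ αᵢ ≤ s for all i, ⟨α, v⟩ ≤ ρ}, and let α̂ ∈ R^n. If Σᵢ clamp(α̂ᵢ, 0, s)·vᵢ ≤ ρ, then the Euclidean projection of α̂ onto Q is given by α*ᵢ = clamp(α̂ᵢ, 0, s). Otherwise there exists η > 0 solving Σᵢ clamp(α̂ᵢ - η·vᵢ, 0, s)·vᵢ = ρ, and the projection is α*ᵢ = clamp(α̂ᵢ - η·vᵢ, 0, s). -/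
/-!
For `η ≥ 0` put `p = clamp(α̂ - η v)`. Coordinatewise clamping is the projection onto `[0, s]`,
so `⟪α̂ - p, β - p⟫ ≤ η ⟪v, β - p⟫` for every `β` in the box; if `η = 0`, or if `⟪p, v⟫ = ρ`
and `β ∈ Q`, the right side is `≤ 0`, and the obtuse-angle criterion gives
`‖p - α̂‖ ≤ ‖β - α̂‖`. The multiplier comes from the intermediate value theorem:
`η ↦ ⟪clamp(α̂ - η v), v⟫` is continuous, exceeds `ρ` at `0`, and for large `η` each coordinate
sits at the end of `[0, s]` minimising `x ↦ x vᵢ`, so it falls below `⟪β₀, v⟫ ≤ ρ` for any `β₀ ∈ Q`.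
-/

open scoped RealInnerProductSpace

open Filter Set

theorem sub_clamp_mul_sub_clamp_nonpos {l u b : ℝ} (hb : b ∈ Icc l u) (a : ℝ) :
    (a - min (max a l) u) * (b - min (max a l) u) ≤ 0 := by
  obtain ⟨hlb, hbu⟩ := hb
  rcases le_total a l with hal | hla
  · rw [max_eq_right hal, min_eq_left (hlb.trans hbu)]
    exact mul_nonpos_of_nonpos_of_nonneg (by linarith) (by linarith)
  rcases le_total a u with hau | hua
  · simp [max_eq_left hla, min_eq_left hau]
  · rw [max_eq_left hla, min_eq_right hua]
    exact mul_nonpos_of_nonneg_of_nonpos (by linarith) (by linarith)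

theorem clamp_mul_eventually_le {s b : ℝ} (hb : b ∈ Icc 0 s) (a c : ℝ) :
    ∀ᶠ η in atTop, min (max (a - η * c) 0) s * c ≤ b * c := by
  rcases lt_trichotomy c 0 with hc | rfl | hc
  · filter_upwards [eventually_ge_atTop ((s - a) / -c)] with η hη
    have : s ≤ a - η * c := by
      rw [div_le_iff₀ (neg_pos.2 hc)] at hη; linarith
    rw [max_eq_left (hb.1.trans (hb.2.trans this)), min_eq_right this]
    exact mul_le_mul_of_nonpos_right hb.2 hc.le
  · simp
  · filter_upwards [eventually_ge_atTop (a / c)] with η hη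
    have : a - η * c ≤ 0 := by
      rw [div_le_iff₀ hc] at hη; linarith
    rw [max_eq_right this, min_eq_left (hb.1.trans hb.2), zero_mul]
    exact mul_nonneg hb.1 hc.le

theorem norm_sub_le_of_inner_sub_nonpos {E : Type*} [NormedAddCommGroup E]
    [InnerProductSpace ℝ E] {a p b : E} (h : ⟪a - p, b - p⟫ ≤ 0) : ‖p - a‖ ≤ ‖b - a‖ := by
  have hsq : ‖b - a‖ ^ 2 = ‖b - p‖ ^ 2 - 2 * ⟪b - p, a - p⟫ + ‖a - p‖ ^ 2 := by
    rw [← norm_sub_sq_real, sub_sub_sub_cancel_right]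
  rw [real_inner_comm, ← norm_neg (a - p), neg_sub] at hsq
  nlinarith [norm_nonneg (p - a), norm_nonneg (b - a), sq_nonneg ‖b - p‖]

variable {ι : Type*}

theorem EuclideanSpace.real_inner_eq_sum [Fintype ι] (x y : EuclideanSpace ℝ ι) :
    ⟪x, y⟫ = ∑ i, x i * y i := by
  simp only [PiLp.inner_apply, RCLike.inner_apply, Real.ringHom_apply, mul_comm]

noncomputable def clampBox (s : ℝ) (x : EuclideanSpace ℝ ι) : EuclideanSpace ℝ ι :=
  (EuclideanSpace.equiv ι ℝ).symm fun i => min (max (x i) 0) s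

theorem clampBox_mem_Icc {s : ℝ} (hs : 0 ≤ s) (x : EuclideanSpace ℝ ι) (i : ι) :
    clampBox s x i ∈ Icc 0 s :=
  ⟨le_min (le_max_right _ _) hs, min_le_right _ _⟩

theorem continuous_clampBox (s : ℝ) : Continuous (clampBox (ι := ι) s) := by
  unfold clampBox
  fun_prop

theorem inner_sub_clampBox_nonpos [Fintype ι] {s : ℝ} (x : EuclideanSpace ℝ ι)
    {β : EuclideanSpace ℝ ι} (hβ : ∀ i, β i ∈ Icc 0 s) :
    ⟪x - clampBox s x, β - clampBox s x⟫ ≤ 0 := by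
  rw [EuclideanSpace.real_inner_eq_sum]
  exact Finset.sum_nonpos fun i _ => sub_clamp_mul_sub_clamp_nonpos (hβ i) (x i)

theorem inner_sub_clampBox_sub_smul_le [Fintype ι] {s : ℝ} (a v : EuclideanSpace ℝ ι) (η : ℝ)
    {β : EuclideanSpace ℝ ι} (hβ : ∀ i, β i ∈ Icc 0 s) :
    ⟪a - clampBox s (a - η • v), β - clampBox s (a - η • v)⟫
      ≤ η * ⟪v, β - clampBox s (a - η • v)⟫ := by
  set p := clampBox s (a - η • v)
  calc ⟪a - p, β - p⟫ = ⟪a - η • v - p, β - p⟫ + η * ⟪v, β - p⟫ := by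
        rw [← real_inner_smul_left, ← inner_add_left, sub_right_comm, sub_add_cancel]
    _ ≤ η * ⟪v, β - p⟫ := add_le_of_nonpos_left (inner_sub_clampBox_nonpos _ hβ)

theorem inner_clampBox_eventually_le [Fintype ι] {s : ℝ} (a v : EuclideanSpace ℝ ι)
    {β : EuclideanSpace ℝ ι} (hβ : ∀ i, β i ∈ Icc 0 s) :
    ∀ᶠ η : ℝ in atTop, ⟪clampBox s (a - η • v), v⟫ ≤ ⟪β, v⟫ := by
  filter_upwards [eventually_all.2 fun i => clamp_mul_eventually_le (hβ i) (a i) (v i)] with η hη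
  simp only [EuclideanSpace.real_inner_eq_sum]
  exact Finset.sum_le_sum fun i _ => hη i

theorem exists_pos_inner_clampBox_eq [Fintype ι] {s ρ : ℝ} {a v β : EuclideanSpace ℝ ι}
    (hρ : ρ < ⟪clampBox s a, v⟫) (hβ : ∀ i, β i ∈ Icc 0 s) (hβv : ⟪β, v⟫ ≤ ρ) :
    ∃ η > (0 : ℝ), ⟪clampBox s (a - η • v), v⟫ = ρ := by
  set g : ℝ → ℝ := fun η => ⟪clampBox s (a - η • v), v⟫
  have hg : Continuous g := by
    have := continuous_clampBox (ι := ι) s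
    fun_prop
  have hg0 : g 0 = ⟪clampBox s a, v⟫ := by simp [g]
  obtain ⟨M, hM, hM0⟩ :=
    ((inner_clampBox_eventually_le a v hβ).and (eventually_ge_atTop 0)).exists
  obtain ⟨η, hη, hgη⟩ :=
    intermediate_value_Icc' hM0 hg.continuousOn ⟨hM.trans hβv, hg0 ▸ hρ.le⟩
  refine ⟨η, lt_of_le_of_ne hη.1 ?_, hgη⟩
  rintro rfl
  exact hρ.ne' (hg0 ▸ hgη)

theorem norm_clampBox_sub_le_of_inner_le [Fintype ι] {s η : ℝ} (hη : 0 ≤ η)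
    {a v β : EuclideanSpace ℝ ι} (hβ : ∀ i, β i ∈ Icc 0 s)
    (hβv : ⟪β, v⟫ ≤ ⟪clampBox s (a - η • v), v⟫) :
    ‖clampBox s (a - η • v) - a‖ ≤ ‖β - a‖ := by
  refine norm_sub_le_of_inner_sub_nonpos ((inner_sub_clampBox_sub_smul_le a v η hβ).trans ?_)
  rw [inner_sub_right, real_inner_comm β, real_inner_comm (clampBox _ _)]
  exact mul_nonpos_of_nonneg_of_nonpos hη (sub_nonpos.2 hβv)

/-- Projection onto the domain `Q = {α : 0 ≤ αᵢ ≤ s, ⟨α, v⟩ ≤ ρ}`.  If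
`Σᵢ clamp(α̂ᵢ,0,s) vᵢ ≤ ρ` then the projection of `α̂` onto `Q` is
`α*ᵢ = clamp(α̂ᵢ,0,s)`; otherwise there exists `η > 0` solving
`Σᵢ clamp(α̂ᵢ - η vᵢ, 0, s) vᵢ = ρ` and the projection is
`α*ᵢ = clamp(α̂ᵢ - η vᵢ, 0, s)`. -/
theorem projection_box_linear_constraint (n : ℕ) (s ρ : ℝ) (hs : 0 < s)
    (v αhat : EuclideanSpace ℝ (Fin n))
    (Q : Set (EuclideanSpace ℝ (Fin n)))
    (hQ : Q = {α | (∀ i, α i ∈ Set.Icc (0 : ℝ) s) ∧ ⟪α, v⟫ ≤ ρ})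
    (hne : Q.Nonempty) :
    ((∑ i, min (max (αhat i) 0) s * v i ≤ ρ) →
      ((EuclideanSpace.equiv (Fin n) ℝ).symm (fun i => min (max (αhat i) 0) s) ∈ Q ∧
        ∀ β ∈ Q,
          ‖(EuclideanSpace.equiv (Fin n) ℝ).symm (fun i => min (max (αhat i) 0) s) - αhat‖
            ≤ ‖β - αhat‖)) ∧
    (¬ (∑ i, min (max (αhat i) 0) s * v i ≤ ρ) →
      ∃ η > (0 : ℝ), (∑ i, min (max (αhat i - η * v i) 0) s * v i = ρ) ∧
        ((EuclideanSpace.equiv (Fin n) ℝ).symm (fun i => min (max (αhat i - η * v i) 0) s) ∈ Q ∧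
          ∀ β ∈ Q,
            ‖(EuclideanSpace.equiv (Fin n) ℝ).symm
                (fun i => min (max (αhat i - η * v i) 0) s) - αhat‖
              ≤ ‖β - αhat‖)) := by
  subst hQ
  obtain ⟨β₀, hβ₀, hβ₀v⟩ := hne
  have inner_clampBox_eq_sum : ∀ x : EuclideanSpace ℝ (Fin n),
      ⟪clampBox s x, v⟫ = ∑ i, min (max (x i) 0) s * v i := fun x =>
    EuclideanSpace.real_inner_eq_sum _ _
  refine ⟨fun hle => ?_, fun hgt => ?_⟩
  · refine ⟨⟨clampBox_mem_Icc hs.le αhat, (inner_clampBox_eq_sum αhat).trans_le hle⟩,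
      fun β hβ => norm_sub_le_of_inner_sub_nonpos (inner_sub_clampBox_nonpos αhat hβ.1)⟩
  · obtain ⟨η, hη, hηρ⟩ := exists_pos_inner_clampBox_eq
      ((inner_clampBox_eq_sum αhat).symm ▸ not_le.1 hgt) hβ₀ hβ₀v
    refine ⟨η, hη, (inner_clampBox_eq_sum _).symm.trans hηρ,
      ⟨clampBox_mem_Icc hs.le (αhat - η • v), hηρ.le⟩,
      fun β hβ => norm_clampBox_sub_le_of_inner_le hη.le hβ.1 (hβ.2.trans hηρ.ge)⟩
end

section
/- (Key prox-step inequality, Euclidean case of Lemma 3.1 of Nemirovski.) Let U ⊆ R^m be a nonempty closed convex set, z₀ ∈ R^m, γ > 0, and ξ, η ∈ R^m. Define z_h = argmin_{z ∈ U} ½‖z - (z₀ - γξ)‖₂² and z₁ = argmin_{z ∈ U} ½‖z - (z₀ - γη)‖₂². Then for every z ∈ U: γ·⟨η, z_h - z⟩ ≤ ½‖z - z₀‖₂² - ½‖z - z₁‖₂² + γ²·‖ξ - η‖₂² - ½(‖z_h - z₀‖₂² + ‖z_h - z₁‖₂²). -/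
/-!
A metric projection `p` of `a` onto a convex set `U` satisfies the variational inequality
`⟪a - p, w - p⟫ ≤ 0` for `w ∈ U`. For `a = x - γ • g` the three-point identity turns this into
`γ ⟪g, p - w⟫ ≤ ½‖w - x‖² - ½‖w - p‖² - ½‖p - x‖²`, and adding the variational inequalities of
two projections shows that projecting is nonexpansive. Writing
`⟪η, zh - z⟫ = ⟪η, z₁ - z⟫ + ⟪ξ, zh - z₁⟫ + ⟪η - ξ, zh - z₁⟫`, the first two terms are bounded
by the prox-step inequality (for `z₁` at `z`, for `zh` at `z₁`), and the last one by
Cauchy–Schwarz and `‖zh - z₁‖ ≤ |γ| ‖ξ - η‖`.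
-/

open scoped RealInnerProductSpace

namespace Convex

variable {E : Type*} [NormedAddCommGroup E] [InnerProductSpace ℝ E] {U : Set E}

theorem real_inner_sub_le_zero_of_isMinOn (hU : Convex ℝ U) {a p w : E} (hp : p ∈ U)
    (hmin : IsMinOn (‖· - a‖) U p) (hw : w ∈ U) : ⟪a - p, w - p⟫ ≤ 0 := by
  have : Nonempty U := ⟨⟨p, hp⟩⟩
  refine (norm_eq_iInf_iff_real_inner_le_zero hU hp).1 (le_antisymm ?_ ?_) w hw
  · exact le_ciInf fun w : U => by simpa only [norm_sub_rev] using isMinOn_iff.1 hmin w w.2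
  · exact ciInf_le (f := fun w : U => ‖a - (w : E)‖)
      ⟨0, Set.forall_mem_range.2 fun _ => norm_nonneg _⟩ ⟨p, hp⟩

theorem norm_sub_le_of_isMinOn (hU : Convex ℝ U) {a b p q : E} (hp : p ∈ U) (hq : q ∈ U)
    (hpa : IsMinOn (‖· - a‖) U p) (hqb : IsMinOn (‖· - b‖) U q) : ‖p - q‖ ≤ ‖a - b‖ := by
  have hvi_p := hU.real_inner_sub_le_zero_of_isMinOn hp hpa hq
  have hvi_q := hU.real_inner_sub_le_zero_of_isMinOn hq hqb hp
  have hsum : ⟪a - p, q - p⟫ + ⟪b - q, p - q⟫ = ‖p - q‖ ^ 2 - ⟪a - b, p - q⟫ := by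
    rw [← neg_sub p q, inner_neg_right, neg_add_eq_sub, ← inner_sub_left,
      ← real_inner_self_eq_norm_sq, ← inner_sub_left]
    congr 1
    abel
  have hcs := real_inner_le_norm (a - b) (p - q)
  nlinarith [norm_nonneg (p - q), norm_nonneg (a - b)]

theorem prox_step_le (hU : Convex ℝ U) {x g p w : E} {γ : ℝ} (hp : p ∈ U)
    (hmin : IsMinOn (‖· - (x - γ • g)‖) U p) (hw : w ∈ U) :
    γ * ⟪g, p - w⟫ ≤ (1 / 2) * ‖w - x‖ ^ 2 - (1 / 2) * ‖w - p‖ ^ 2 - (1 / 2) * ‖p - x‖ ^ 2 := by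
  have hvi := hU.real_inner_sub_le_zero_of_isMinOn hp hmin hw
  rw [show x - γ • g - p = (x - p) - γ • g by abel, inner_sub_left, real_inner_smul_left] at hvi
  have hthree := norm_sub_sq_real (w - p) (x - p)
  rw [sub_sub_sub_cancel_right, norm_sub_rev x p, real_inner_comm] at hthree
  rw [← neg_sub w p, inner_neg_right]
  linarith

end Convex

theorem prox_key_inequality_general (m : ℕ) (U : Set (EuclideanSpace ℝ (Fin m)))
    (hUconv : Convex ℝ U)
    (z₀ ξ η zh z₁ : EuclideanSpace ℝ (Fin m)) (γ : ℝ)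
    (hzh : zh ∈ U ∧ ∀ z ∈ U,
      (1 / 2) * ‖zh - (z₀ - γ • ξ)‖ ^ 2 ≤ (1 / 2) * ‖z - (z₀ - γ • ξ)‖ ^ 2)
    (hz₁ : z₁ ∈ U ∧ ∀ z ∈ U,
      (1 / 2) * ‖z₁ - (z₀ - γ • η)‖ ^ 2 ≤ (1 / 2) * ‖z - (z₀ - γ • η)‖ ^ 2) :
    ∀ z ∈ U,
      γ * ⟪η, zh - z⟫ ≤ (1 / 2) * ‖z - z₀‖ ^ 2 - (1 / 2) * ‖z - z₁‖ ^ 2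
        + γ ^ 2 * ‖ξ - η‖ ^ 2 - (1 / 2) * (‖zh - z₀‖ ^ 2 + ‖zh - z₁‖ ^ 2) := by
  intro z hz
  have isMinOn_of_half_sq {p a : EuclideanSpace ℝ (Fin m)}
      (h : ∀ w ∈ U, (1 / 2) * ‖p - a‖ ^ 2 ≤ (1 / 2) * ‖w - a‖ ^ 2) : IsMinOn (‖· - a‖) U p :=
    isMinOn_iff.2 fun w hw =>
      (pow_le_pow_iff_left₀ (norm_nonneg _) (norm_nonneg _) two_ne_zero).1 (by linarith [h w hw])
  have hmin_h := isMinOn_of_half_sq hzh.2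
  have hmin_1 := isMinOn_of_half_sq hz₁.2
  have step_z₁ := hUconv.prox_step_le hz₁.1 hmin_1 hz
  have step_zh := hUconv.prox_step_le hzh.1 hmin_h hz₁.1
  have hlip := hUconv.norm_sub_le_of_isMinOn hzh.1 hz₁.1 hmin_h hmin_1
  rw [sub_sub_sub_cancel_left, ← smul_sub] at hlip
  have step_diff : γ * ⟪η - ξ, zh - z₁⟫ ≤ γ ^ 2 * ‖ξ - η‖ ^ 2 :=
    calc γ * ⟪η - ξ, zh - z₁⟫ = ⟪γ • (η - ξ), zh - z₁⟫ := (real_inner_smul_left _ _ _).symm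
      _ ≤ ‖γ • (η - ξ)‖ * ‖zh - z₁‖ := real_inner_le_norm _ _
      _ ≤ ‖γ • (η - ξ)‖ ^ 2 := by rw [sq]; gcongr
      _ = γ ^ 2 * ‖ξ - η‖ ^ 2 := by rw [norm_smul, mul_pow, Real.norm_eq_abs, sq_abs, norm_sub_rev]
  have split : ⟪η, zh - z⟫ = ⟪η - ξ, zh - z₁⟫ + ⟪ξ, zh - z₁⟫ + ⟪η, z₁ - z⟫ := by
    rw [← sub_add_sub_cancel zh z₁ z, inner_add_right, inner_sub_left]
    ring
  rw [norm_sub_rev z₁ zh] at step_zh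
  rw [split]
  linarith

/-- Key prox-step inequality (Euclidean case of Lemma 3.1 of Nemirovski). -/
theorem prox_key_inequality (m : ℕ) (U : Set (EuclideanSpace ℝ (Fin m)))
    (hUconv : Convex ℝ U) (hUclosed : IsClosed U) (hne : U.Nonempty)
    (z₀ ξ η zh z₁ : EuclideanSpace ℝ (Fin m)) (γ : ℝ) (hγ : 0 < γ)
    (hzh : zh ∈ U ∧ ∀ z ∈ U,
      (1 / 2) * ‖zh - (z₀ - γ • ξ)‖ ^ 2 ≤ (1 / 2) * ‖z - (z₀ - γ • ξ)‖ ^ 2)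
    (hz₁ : z₁ ∈ U ∧ ∀ z ∈ U,
      (1 / 2) * ‖z₁ - (z₀ - γ • η)‖ ^ 2 ≤ (1 / 2) * ‖z - (z₀ - γ • η)‖ ^ 2) :
    ∀ z ∈ U,
      γ * ⟪η, zh - z⟫ ≤ (1 / 2) * ‖z - z₀‖ ^ 2 - (1 / 2) * ‖z - z₁‖ ^ 2
        + γ ^ 2 * ‖ξ - η‖ ^ 2 - (1 / 2) * (‖zh - z₀‖ ^ 2 + ‖zh - z₁‖ ^ 2) :=
  prox_key_inequality_general m U hUconv z₀ ξ η zh z₁ γ hzh hz₁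
end

section
/- The map η ↦ ‖w(η)‖ is non-increasing on [0, ∞), where w(η) is the unique minimizer of w ↦ ½‖w - ŵ‖₂² + η·‖w‖ over R^d, ‖·‖ is any norm on R^d, and ŵ ∈ R^d is fixed. -/
/-!
For `η₁ < η₂`, testing each minimality inequality at the other minimizer and adding gives
`(η₂ - η₁) (N w₂ - N w₁) ≤ 0`. For `η₁ = η₂` the objective is `1`-strongly convex
(`½‖w - ŵ‖²` minus `½‖w‖²` is affine, and `η₁ N` is convex), so its minimizer is unique.
-/

open Set

theorem penalty_le_of_lt_of_minimizers {α : Type*} {f N : α → ℝ} {η₁ η₂ : ℝ} {w₁ w₂ : α}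
    (hη : η₁ < η₂) (hmin₁ : ∀ w, f w₁ + η₁ * N w₁ ≤ f w + η₁ * N w)
    (hmin₂ : ∀ w, f w₂ + η₂ * N w₂ ≤ f w + η₂ * N w) :
    N w₂ ≤ N w₁ := by
  have hsum : (η₂ - η₁) * (N w₂ - N w₁) ≤ 0 := by linarith [hmin₁ w₂, hmin₂ w₁]
  exact sub_nonpos.1 (nonpos_of_mul_nonpos_right hsum (sub_pos.2 hη))

theorem ConvexOn.strongConvexOn_half_sq_norm_sub_add {E : Type*} [NormedAddCommGroup E]
    [InnerProductSpace ℝ E] {g : E → ℝ} (hg : ConvexOn ℝ univ g) (a : E) :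
    StrongConvexOn univ 1 fun w ↦ 1 / 2 * ‖w - a‖ ^ 2 + g w := by
  rw [strongConvexOn_iff_convex]
  have hlin : ConvexOn ℝ univ fun w ↦ -inner ℝ w a :=
    (-(innerₛₗ ℝ a : E →ₗ[ℝ] ℝ)).convexOn convex_univ |>.congr fun w _ ↦ by simp [real_inner_comm]
  refine ((hg.add hlin).add_const (1 / 2 * ‖a‖ ^ 2)).congr fun w _ ↦ ?_
  simp only [Pi.add_apply, norm_sub_sq_real]
  ring

theorem prox_norm_nonincreasing_general (d : ℕ)
    (N : EuclideanSpace ℝ (Fin d) → ℝ)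
    (hN1 : ∀ (a : ℝ) (w : EuclideanSpace ℝ (Fin d)), N (a • w) = |a| * N w)
    (hN2 : ∀ u v : EuclideanSpace ℝ (Fin d), N (u + v) ≤ N u + N v)
    (what : EuclideanSpace ℝ (Fin d))
    (η₁ η₂ : ℝ) (h₁ : 0 ≤ η₁) (h₁₂ : η₁ ≤ η₂)
    (w₁ w₂ : EuclideanSpace ℝ (Fin d))
    (hmin₁ : ∀ w, (1 / 2) * ‖w₁ - what‖ ^ 2 + η₁ * N w₁
        ≤ (1 / 2) * ‖w - what‖ ^ 2 + η₁ * N w)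
    (hmin₂ : ∀ w, (1 / 2) * ‖w₂ - what‖ ^ 2 + η₂ * N w₂
        ≤ (1 / 2) * ‖w - what‖ ^ 2 + η₂ * N w) :
    N w₂ ≤ N w₁ := by
  rcases h₁₂.lt_or_eq with hlt | rfl
  · exact penalty_le_of_lt_of_minimizers (f := fun w ↦ 1 / 2 * ‖w - what‖ ^ 2) hlt hmin₁ hmin₂
  · let p : Seminorm ℝ (EuclideanSpace ℝ (Fin d)) :=
      .of N hN2 fun a w ↦ by rw [hN1, Real.norm_eq_abs]
    have hconv : ConvexOn ℝ univ fun w ↦ η₁ * N w := p.convexOn.smul h₁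
    have hstrict := (hconv.strongConvexOn_half_sq_norm_sub_add what).strictConvexOn one_pos
    rw [hstrict.eq_of_isMinOn (isMinOn_univ_iff.2 hmin₁) (isMinOn_univ_iff.2 hmin₂) trivial trivial]

/-- The map `η ↦ N(w(η))` is non-increasing on `[0,∞)`, where `w(η)` is the
(unique) minimizer of `w ↦ ½‖w - ŵ‖₂² + η N(w)` and `N` is any norm on `ℝ^d`. -/
theorem prox_norm_nonincreasing (d : ℕ)
    (N : EuclideanSpace ℝ (Fin d) → ℝ)
    (hN1 : ∀ (a : ℝ) (w : EuclideanSpace ℝ (Fin d)), N (a • w) = |a| * N w)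
    (hN2 : ∀ u v : EuclideanSpace ℝ (Fin d), N (u + v) ≤ N u + N v)
    (hN3 : ∀ w : EuclideanSpace ℝ (Fin d), N w = 0 → w = 0)
    (what : EuclideanSpace ℝ (Fin d))
    (η₁ η₂ : ℝ) (h₁ : 0 ≤ η₁) (h₁₂ : η₁ ≤ η₂)
    (w₁ w₂ : EuclideanSpace ℝ (Fin d))
    (hmin₁ : ∀ w, (1 / 2) * ‖w₁ - what‖ ^ 2 + η₁ * N w₁
        ≤ (1 / 2) * ‖w - what‖ ^ 2 + η₁ * N w)
    (hmin₂ : ∀ w, (1 / 2) * ‖w₂ - what‖ ^ 2 + η₂ * N w₂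
        ≤ (1 / 2) * ‖w - what‖ ^ 2 + η₂ * N w) :
    N w₂ ≤ N w₁ :=
  prox_norm_nonincreasing_general d N hN1 hN2 what η₁ η₂ h₁ h₁₂ w₁ w₂ hmin₁ hmin₂
end
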